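/- arXiv:1911.12904 — 4 statements merged into one kernel-verified Lean document; each statement's English description precedes it below -/
import Mathlib

section
/- Well-behaved asymmetric delta lenses are closed under sequential composition: given delta lenses k = (get¹, put¹) : 𝒜 → ℬ and ℓ = (get², put²) : ℬ → 𝒞, their composite is the delta lens (get¹ ⋙ get², put) with put_A(w) := put¹_A(put²_{get¹(A)}(w)) for A ∈ 𝒜 and w : get²(get¹(A)) ⟶ C'; if k and ℓ both satisfy Stability and Putget, then so does their composite. -/
open CategoryTheory

universe v₁ v₂ v₃ u₁ u₂ u₃

/-- An asymmetric delta lens from `S` to `T`: a functor `get : S ⥤ T` together with,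
for every object `A` and every morphism `v : get(A) ⟶ B'`, a lifted morphism
`put A v : A ⟶ A'` whose target satisfies `get(A') = B'` (the Putget₀ law). -/
structure DLens (S : Type u₁) [Category.{v₁} S] (T : Type u₂) [Category.{v₂} T] where
  /-- the get functor -/
  get : S ⥤ T
  /-- target of the propagated update -/
  tgt : ∀ (A : S) {B' : T}, (get.obj A ⟶ B') → S
  /-- the put operation `put_A(v) : A ⟶ A'` -/
  put : ∀ (A : S) {B' : T} (v : get.obj A ⟶ B'), A ⟶ tgt A v
  /-- the Putget₀ law: `get(A') = B'` -/
  putget₀ : ∀ (A : S) {B' : T} (v : get.obj A ⟶ B'), get.obj (tgt A v) = B'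

namespace DLens

variable {S : Type u₁} [Category.{v₁} S] {T : Type u₂} [Category.{v₂} T]

/-- Well-behavedness of a delta lens: Stability and Putget. -/
structure IsWb (ℓ : DLens S T) : Prop where
  /-- Stability: the target of the update propagated from an identity is the original object -/
  tgt_id : ∀ A : S, ℓ.tgt A (𝟙 (ℓ.get.obj A)) = A
  /-- Stability: `put_A(id_{get A}) = id_A` -/
  put_id : ∀ A : S, ℓ.put A (𝟙 (ℓ.get.obj A)) = eqToHom (tgt_id A).symm
  /-- Putget: `get(put_A(v)) = v` -/
  putget : ∀ (A : S) {B' : T} (v : ℓ.get.obj A ⟶ B'),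
    ℓ.get.map (ℓ.put A v) ≫ eqToHom (ℓ.putget₀ A v) = v

variable {A : Type u₁} [Category.{v₁} A] {B : Type u₂} [Category.{v₂} B]
  {C : Type u₃} [Category.{v₃} C]

/-- Sequential composition of delta lenses: `get = get¹ ⋙ get²` and
`put_A(w) = put¹_A (put²_{get¹ A} w)`. -/
def seq (k : DLens A B) (ℓ : DLens B C) : DLens A C where
  get := k.get ⋙ ℓ.get
  tgt := fun A' {C'} w => k.tgt A' (ℓ.put (k.get.obj A') w)
  put := fun A' {C'} w => k.put A' (ℓ.put (k.get.obj A') w)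
  putget₀ := fun A' {C'} w => by
    show ℓ.get.obj (k.get.obj (k.tgt A' (ℓ.put (k.get.obj A') w))) = C'
    rw [k.putget₀, ℓ.putget₀]

/-- The identity delta lens: identity functor and `put_A(v) = v`. -/
def idD (A : Type u₁) [Category.{v₁} A] : DLens A A where
  get := 𝟭 A
  tgt := fun _ {B'} _ => B'
  put := fun _ {_B'} v => v
  putget₀ := fun _ {_B'} _ => rfl

end DLens

namespace DLens

section

variable {S : Type u₁} [Category.{v₁} S] {T : Type u₂} [Category.{v₂} T] {k : DLens S T}

/-- In a composite, `put¹` receives `put²(id)`, which Stability only gives as an `eqToHom`. -/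
theorem IsWb.tgt_of_eq_eqToHom (hk : k.IsWb) {A : S} {B' : T} {v : k.get.obj A ⟶ B'}
    {h : k.get.obj A = B'} (hv : v = eqToHom h) : k.tgt A v = A := by
  subst hv h
  exact hk.tgt_id A

theorem IsWb.put_of_eq_eqToHom (hk : k.IsWb) {A : S} {B' : T} {v : k.get.obj A ⟶ B'}
    {h : k.get.obj A = B'} (hv : v = eqToHom h) (h' : A = k.tgt A v) :
    k.put A v = eqToHom h' := by
  subst hv h
  exact hk.put_id A

theorem IsWb.map_put (hk : k.IsWb) (A : S) {B' : T} (v : k.get.obj A ⟶ B') :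
    k.get.map (k.put A v) = v ≫ eqToHom (k.putget₀ A v).symm :=
  (comp_eqToHom_iff _ _ _).1 (hk.putget A v)

end

variable {A : Type u₁} [Category.{v₁} A] {B : Type u₂} [Category.{v₂} B]
  {C : Type u₃} [Category.{v₃} C] {k : DLens A B} {ℓ : DLens B C}

theorem IsWb.seq_putget (hk : k.IsWb) (hℓ : ℓ.IsWb) (X : A) {C' : C}
    (w : ℓ.get.obj (k.get.obj X) ⟶ C')
    (h : ℓ.get.obj (k.get.obj (k.tgt X (ℓ.put (k.get.obj X) w))) = C') :
    ℓ.get.map (k.get.map (k.put X (ℓ.put (k.get.obj X) w))) ≫ eqToHom h = w := by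
  rw [hk.map_put, Functor.map_comp, eqToHom_map, Category.assoc, eqToHom_trans, hℓ.putget]

end DLens

/-- **Statement 8.** Well-behaved asymmetric delta lenses are closed under sequential
composition: if `k` and `ℓ` both satisfy Stability and Putget, then so does their
composite `(get¹ ⋙ get², put)` with `put_A(w) = put¹_A (put²_{get¹ A} w)`. -/
theorem DLens.seq_isWb {𝒜 : Type u₁} [Category.{v₁} 𝒜] {ℬ : Type u₂} [Category.{v₂} ℬ]
    {𝒞 : Type u₃} [Category.{v₃} 𝒞] (k : DLens 𝒜 ℬ) (ℓ : DLens ℬ 𝒞)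
    (hk : k.IsWb) (hℓ : ℓ.IsWb) : (k.seq ℓ).IsWb :=
  { tgt_id := fun _ => hk.tgt_of_eq_eqToHom (hℓ.put_id _)
    put_id := fun _ => hk.put_of_eq_eqToHom (hℓ.put_id _) _
    putget := fun X _ w => hk.seq_putget hℓ X w _ }
end

section
/- Asymmetric delta lenses with amendment (aa-lenses) form a category aaLens under the stated composition: the composite of two aa-lenses is an aa-lens (in particular it satisfies the Putget₀ typing for the composed amendment), composition is associative with identity aa-lenses (identity functor, put^a_A(v) = v, identity amendments) as units; moreover, if both aa-lenses are well-behaved (satisfy Stability and the amended Putget law), then so is their composite, so wb aa-lenses form a subcategory aaLens_wb ⊂ aaLens. -/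
open CategoryTheory

universe v₁ v₂ v₃ u₁ u₂ u₃

/-- An asymmetric delta lens with amendment (aa-lens) from `S` to `T`: a functor
`get : S ⥤ T`, a put operation `put^a` and an amendment operation `put^b`;
the typing `put^b_A(v) : B' ⟶ get(A')` is the Putget₀ law. -/
structure AALens (S : Type u₁) [Category.{v₁} S] (T : Type u₂) [Category.{v₂} T] where
  /-- the get functor -/
  get : S ⥤ T
  /-- target of the propagated update -/
  tgtA : ∀ (A : S) {B' : T}, (get.obj A ⟶ B') → S
  /-- the put operation `put^a_A(v) : A ⟶ A'` -/
  putA : ∀ (A : S) {B' : T} (v : get.obj A ⟶ B'), A ⟶ tgtA A v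
  /-- the amendment `put^b_A(v) : B' ⟶ get(A')`  (Putget₀) -/
  putB : ∀ (A : S) {B' : T} (v : get.obj A ⟶ B'), B' ⟶ get.obj (tgtA A v)

namespace AALens

variable {S : Type u₁} [Category.{v₁} S] {T : Type u₂} [Category.{v₂} T]

/-- Well-behavedness of an aa-lens: Stability and the amended Putget law. -/
structure IsWb (ℓ : AALens S T) : Prop where
  /-- Stability: the target of the update propagated from an identity is the original object -/
  tgtA_id : ∀ A : S, ℓ.tgtA A (𝟙 (ℓ.get.obj A)) = A
  /-- Stability: `put^a_A(id) = id_A` -/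
  putA_id : ∀ A : S, ℓ.putA A (𝟙 (ℓ.get.obj A)) = eqToHom (tgtA_id A).symm
  /-- Stability: `put^b_A(id) = id` -/
  putB_id : ∀ A : S, ℓ.putB A (𝟙 (ℓ.get.obj A)) = eqToHom (by rw [tgtA_id A])
  /-- amended Putget: `get(put^a_A(v)) = v ≫ put^b_A(v)` -/
  putget : ∀ (A : S) {B' : T} (v : ℓ.get.obj A ⟶ B'),
    ℓ.get.map (ℓ.putA A v) = v ≫ ℓ.putB A v

variable {A : Type u₁} [Category.{v₁} A] {B : Type u₂} [Category.{v₂} B]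
  {C : Type u₃} [Category.{v₃} C]

/-- Sequential composition of aa-lenses: `get = get^k ⋙ get^ℓ`,
`put^a_A(w) = put^{k,a}_A (put^{ℓ,a}_{get^k A} w)` and
`put^b_A(w) = put^{ℓ,b}_{get^k A}(w) ≫ get^ℓ(put^{k,b}_A(v))` where
`v = put^{ℓ,a}_{get^k A}(w)`. -/
def seq (k : AALens A B) (ℓ : AALens B C) : AALens A C where
  get := k.get ⋙ ℓ.get
  tgtA := fun A' {C'} w => k.tgtA A' (ℓ.putA (k.get.obj A') w)
  putA := fun A' {C'} w => k.putA A' (ℓ.putA (k.get.obj A') w)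
  putB := fun A' {C'} w =>
    ℓ.putB (k.get.obj A') w ≫ ℓ.get.map (k.putB A' (ℓ.putA (k.get.obj A') w))

/-- The identity aa-lens: identity functor, `put^a_A(v) = v`, identity amendments. -/
def idA (A : Type u₁) [Category.{v₁} A] : AALens A A where
  get := 𝟭 A
  tgtA := fun _ {B'} _ => B'
  putA := fun _ {_B'} v => v
  putB := fun _ {B'} _ => 𝟙 B'

end AALens

universe v₄ u₄

namespace AALens

section Stability

variable {S : Type u₁} [Category.{v₁} S] {T : Type u₂} [Category.{v₂} T]
  {ℓ : AALens S T}

/- Stability of `ℓ` identifies `put^{ℓ,a}(id)` only with an `eqToHom`, and that is what the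
composite feeds into the put of `k`; hence Stability in this transported form. -/

theorem IsWb.tgtA_eq_of_eq_eqToHom (h : ℓ.IsWb) (A : S) {B' : T} (e : ℓ.get.obj A = B')
    {v : ℓ.get.obj A ⟶ B'} (hv : v = eqToHom e) : ℓ.tgtA A v = A := by
  subst hv e; exact h.tgtA_id A

theorem IsWb.putA_eq_of_eq_eqToHom (h : ℓ.IsWb) (A : S) {B' : T} (e : ℓ.get.obj A = B')
    {v : ℓ.get.obj A ⟶ B'} (hv : v = eqToHom e) :
    ℓ.putA A v = eqToHom (h.tgtA_eq_of_eq_eqToHom A e hv).symm := by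
  subst hv e; exact h.putA_id A

theorem IsWb.putB_eq_of_eq_eqToHom (h : ℓ.IsWb) (A : S) {B' : T} (e : ℓ.get.obj A = B')
    {v : ℓ.get.obj A ⟶ B'} (hv : v = eqToHom e) :
    ℓ.putB A v = eqToHom (by rw [h.tgtA_eq_of_eq_eqToHom A e hv, e]) := by
  subst hv e; exact h.putB_id A

end Stability

variable {𝒜 : Type u₁} [Category.{v₁} 𝒜] {ℬ : Type u₂} [Category.{v₂} ℬ]
  {𝒞 : Type u₃} [Category.{v₃} 𝒞] {𝒟 : Type u₄} [Category.{v₄} 𝒟]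

theorem seq_assoc (k : AALens 𝒟 𝒜) (ℓ : AALens 𝒜 ℬ) (m : AALens ℬ 𝒞) :
    (k.seq ℓ).seq m = k.seq (ℓ.seq m) := by
  dsimp only [seq]
  congr 1
  funext A C' w
  simp only [Functor.comp_obj, Functor.comp_map, Functor.map_comp, Category.assoc]

theorem idA_seq (f : AALens 𝒜 ℬ) : (idA 𝒜).seq f = f := by
  dsimp only [seq, idA]
  congr 1
  funext A B' w
  rw [f.get.map_id, Category.comp_id]
  rfl

theorem seq_idA (f : AALens 𝒜 ℬ) : f.seq (idA ℬ) = f := by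
  dsimp only [seq, idA]
  congr 1
  funext A B' w
  exact Category.id_comp _

theorem isWb_idA : (idA 𝒜).IsWb where
  tgtA_id _ := rfl
  putA_id _ := rfl
  putB_id _ := rfl
  putget _ _ v := (Category.comp_id v).symm

theorem IsWb.seq {k : AALens 𝒜 ℬ} {ℓ : AALens ℬ 𝒞} (hk : k.IsWb) (hℓ : ℓ.IsWb) :
    (k.seq ℓ).IsWb := by
  have putA_id (A : 𝒜) := hℓ.putA_id (k.get.obj A)
  refine ⟨fun A => hk.tgtA_eq_of_eq_eqToHom A _ (putA_id A),
    fun A => hk.putA_eq_of_eq_eqToHom A _ (putA_id A), fun A => ?_,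
    fun A C' (w : ℓ.get.obj (k.get.obj A) ⟶ C') => ?_⟩
  · change ℓ.putB _ (𝟙 _) ≫
      ℓ.get.map (k.putB A (ℓ.putA (k.get.obj A) (𝟙 (ℓ.get.obj (k.get.obj A))))) = _
    rw [hℓ.putB_id, hk.putB_eq_of_eq_eqToHom A _ (putA_id A), eqToHom_map, eqToHom_trans]
    rfl
  · change ℓ.get.map (k.get.map (k.putA A (ℓ.putA (k.get.obj A) w))) =
      w ≫ ℓ.putB _ w ≫ ℓ.get.map (k.putB A (ℓ.putA (k.get.obj A) w))
    rw [hk.putget, Functor.map_comp, hℓ.putget, Category.assoc]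

end AALens

/-- Asymmetric delta lenses with amendment (aa-lenses) form a category
under the stated composition: the composite of two aa-lenses is an aa-lens (in particular
the composed amendment satisfies the Putget₀ typing, witnessed by the last clause being
well-typed), composition is associative with the identity aa-lenses as units; moreover
well-behaved aa-lenses are closed under this composition and identities are well-behaved,
so wb aa-lenses form a subcategory `aaLens_wb ⊂ aaLens`. -/
theorem AALens.aaLens_category
    {𝒜 : Type u₁} [Category.{v₁} 𝒜] {ℬ : Type u₂} [Category.{v₂} ℬ]
    {𝒞 : Type u₃} [Category.{v₃} 𝒞] {𝒟 : Type u₁} [Category.{v₁} 𝒟] :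
    -- the composite is the stated aa-lens; in particular its amendment is
    -- `put^{ℓ,b}(w) ≫ get^ℓ(put^{k,b}(v))`, which is Putget₀-typed
    (∀ (k : AALens 𝒜 ℬ) (ℓ : AALens ℬ 𝒞) (A : 𝒜) (C' : 𝒞)
        (w : ℓ.get.obj (k.get.obj A) ⟶ C'),
        (k.seq ℓ).get = k.get ⋙ ℓ.get ∧
        (k.seq ℓ).putA A w = k.putA A (ℓ.putA (k.get.obj A) w) ∧
        (k.seq ℓ).putB A w =
          ℓ.putB (k.get.obj A) w ≫ ℓ.get.map (k.putB A (ℓ.putA (k.get.obj A) w))) ∧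
    -- associativity
    (∀ (k : AALens 𝒟 𝒜) (ℓ : AALens 𝒜 ℬ) (m : AALens ℬ 𝒞),
        (k.seq ℓ).seq m = k.seq (ℓ.seq m)) ∧
    -- identity aa-lenses are units
    (∀ f : AALens 𝒜 ℬ, (AALens.idA 𝒜).seq f = f ∧ f.seq (AALens.idA ℬ) = f) ∧
    -- well-behaved aa-lenses form a subcategory
    (AALens.idA 𝒜).IsWb ∧
    (∀ (k : AALens 𝒜 ℬ) (ℓ : AALens ℬ 𝒞), k.IsWb → ℓ.IsWb → (k.seq ℓ).IsWb) :=
  ⟨fun _ _ _ _ _ => ⟨rfl, rfl, rfl⟩, seq_assoc, fun f => ⟨idA_seq f, seq_idA f⟩, isWb_idA,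
    fun _ _ hk hℓ => hk.seq hℓ⟩
end

section
/- An ordinary asymmetric delta lens can be regarded as an aa-lens whose amendments are all identities, and this identification is compatible with composition and well-behavedness: if two aa-lenses have identity amendments, then their aa-lens composite also has identity amendments and its get and put^a components coincide with the sequential composition of the underlying plain delta lenses; moreover an aa-lens with identity amendments is well-behaved as an aa-lens if and only if the underlying plain delta lens is well-behaved. Hence there are embeddings aLens ⊂ aaLens and aLens_wb ⊂ aaLens_wb. -/
open CategoryTheory

universe v₁ v₂ v₃ u₁ u₂ u₃

/-- A plain delta lens regarded as an aa-lens whose amendments are all identities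
(along the Putget₀ equality `get(A') = B'`). -/
def DLens.toAA {S : Type u₁} [Category.{v₁} S] {T : Type u₂} [Category.{v₂} T]
    (d : DLens S T) : AALens S T where
  get := d.get
  tgtA := d.tgt
  putA := d.put
  putB := fun A {_B'} v => eqToHom (d.putget₀ A v).symm

/-- An aa-lens has identity amendments if each amendment is the identity
(modulo the Putget₀ equality `get(A') = B'`). -/
def AALens.HasIdAmendments {S : Type u₁} [Category.{v₁} S] {T : Type u₂} [Category.{v₂} T]
    (ℓ : AALens S T) : Prop :=
  ∀ (A : S) (B' : T) (v : ℓ.get.obj A ⟶ B'),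
    ∃ h : ℓ.get.obj (ℓ.tgtA A v) = B', ℓ.putB A v = eqToHom h.symm

/-! The amendments of `toAA` are `eqToHom`s, and every claim reduces to the calculus of
`eqToHom`: functors send `eqToHom` to `eqToHom` and `eqToHom`s compose, so identity amendments
compose to identity amendments; and an amendment `eqToHom h.symm` on the right of the amended
Putget law is the plain Putget law with `eqToHom h` moved to the other side. -/

namespace AALens

variable {A : Type u₁} [Category.{v₁} A] {B : Type u₂} [Category.{v₂} B]
  {C : Type u₃} [Category.{v₃} C]

theorem HasIdAmendments.seq {k : AALens A B} {ℓ : AALens B C} (hk : k.HasIdAmendments)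
    (hℓ : ℓ.HasIdAmendments) : (k.seq ℓ).HasIdAmendments := by
  intro a c w
  obtain ⟨hℓw, eℓ⟩ := hℓ (k.get.obj a) c w
  obtain ⟨hkv, ek⟩ := hk a _ (ℓ.putA (k.get.obj a) w)
  refine ⟨(congrArg ℓ.get.obj hkv).trans hℓw, ?_⟩
  change ℓ.putB (k.get.obj a) w ≫ ℓ.get.map (k.putB a (ℓ.putA (k.get.obj a) w)) = _
  rw [eℓ, ek, eqToHom_map, eqToHom_trans]
  rfl

end AALens

namespace DLens

variable {S : Type u₁} [Category.{v₁} S] {T : Type u₂} [Category.{v₂} T]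

theorem toAA_hasIdAmendments (d : DLens S T) : d.toAA.HasIdAmendments :=
  fun a _ v => ⟨d.putget₀ a v, rfl⟩

theorem toAA_injective : Function.Injective (toAA (S := S) (T := T)) := by
  rintro ⟨get, tgt, put, putget₀⟩ ⟨get', tgt', put', putget₀'⟩ h
  simp only [toAA, AALens.mk.injEq] at h
  obtain ⟨rfl, rfl, rfl, -⟩ := h
  rfl

theorem toAA_isWb_iff (d : DLens S T) : d.toAA.IsWb ↔ d.IsWb := by
  have putget_iff : ∀ (a : S) {b : T} (v : d.get.obj a ⟶ b),
      d.get.map (d.put a v) = v ≫ eqToHom (d.putget₀ a v).symm ↔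
        d.get.map (d.put a v) ≫ eqToHom (d.putget₀ a v) = v :=
    fun a _ v => (comp_eqToHom_iff _ _ _).symm
  constructor
  · rintro ⟨tgt_id, put_id, -, putget⟩
    exact ⟨tgt_id, put_id, fun a _ v => (putget_iff a v).mp (putget a v)⟩
  · rintro ⟨tgt_id, put_id, putget⟩
    exact ⟨tgt_id, put_id, fun _ => rfl, fun a _ v => (putget_iff a v).mpr (putget a v)⟩

variable {A : Type u₁} [Category.{v₁} A] {B : Type u₂} [Category.{v₂} B]
  {C : Type u₃} [Category.{v₃} C]

theorem toAA_seq (k : DLens A B) (ℓ : DLens B C) : k.toAA.seq ℓ.toAA = (k.seq ℓ).toAA := by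
  simp only [toAA, seq, AALens.seq, AALens.mk.injEq, heq_eq_eq, true_and]
  funext a c w
  rw [eqToHom_map, eqToHom_trans]

end DLens

/-- Plain delta lenses embed into aa-lenses as the aa-lenses with
identity amendments, compatibly with composition and well-behavedness: the composite of
two aa-lenses with identity amendments again has identity amendments and its `get`/`put^a`
components are those of the sequential composition of the underlying plain lenses; `toAA`
is injective and commutes with composition; and an aa-lens with identity amendments is
well-behaved iff the underlying plain lens is. -/
theorem DLens.toAA_embedding
    {S : Type u₁} [Category.{v₁} S] {T : Type u₂} [Category.{v₂} T]
    {𝒜 : Type u₁} [Category.{v₁} 𝒜] {ℬ : Type u₂} [Category.{v₂} ℬ]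
    {𝒞 : Type u₃} [Category.{v₃} 𝒞] :
    -- identity amendments are preserved by composition, whose get/putᵃ components are
    -- those of plain sequential composition
    (∀ (k : AALens 𝒜 ℬ) (ℓ : AALens ℬ 𝒞), k.HasIdAmendments → ℓ.HasIdAmendments →
        ((k.seq ℓ).HasIdAmendments ∧
          (k.seq ℓ).get = k.get ⋙ ℓ.get ∧
          ∀ (A : 𝒜) (C' : 𝒞) (w : ℓ.get.obj (k.get.obj A) ⟶ C'),
            (k.seq ℓ).putA A w = k.putA A (ℓ.putA (k.get.obj A) w))) ∧
    -- `toAA` identifies plain lenses with aa-lenses with identity amendments,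
    -- compatibly with composition
    (∀ d : DLens S T, d.toAA.HasIdAmendments) ∧
    (Function.Injective (DLens.toAA (S := S) (T := T))) ∧
    (∀ (k : DLens 𝒜 ℬ) (ℓ : DLens ℬ 𝒞), k.toAA.seq ℓ.toAA = (k.seq ℓ).toAA) ∧
    -- well-behavedness corresponds
    (∀ d : DLens S T, d.toAA.IsWb ↔ d.IsWb) := by
  refine ⟨fun k ℓ hk hℓ => ⟨hk.seq hℓ, rfl, fun _ _ _ => rfl⟩, DLens.toAA_hasIdAmendments,
    DLens.toAA_injective, DLens.toAA_seq, DLens.toAA_isWb_iff⟩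
end

section
/- Small categories as objects together with equivalence classes of parameterized functors as morphisms form a category pCat: sequential composition of equivalence classes of p-functors is well defined and strictly associative (using the canonical isomorphism (𝒫 × 𝒬) × ℛ ≅ 𝒫 × (𝒬 × ℛ), strict associativity of functor composition, and strict associativity of the Godement product), and the identity p-functors (𝟙, Id) are two-sided units. -/
open CategoryTheory

universe u

/-- A parameterized functor (p-functor) from `S` to `T`: a category `P` of parameters
together with a functor `P ⥤ Fun(S, T)`. -/
structure ParFunctor (S : Type u) [Category.{u} S] (T : Type u) [Category.{u} T] where
  /-- the category of parameters -/
  P : Type u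
  [instP : Category.{u} P]
  /-- the underlying functor into the functor category -/
  F : P ⥤ S ⥤ T

attribute [instance] ParFunctor.instP

/-- A (strict) isomorphism of categories. -/
structure CatIso (A : Type u) (B : Type u) [Category.{u} A] [Category.{u} B] where
  hom : A ⥤ B
  inv : B ⥤ A
  hom_inv_id : hom ⋙ inv = 𝟭 A
  inv_hom_id : inv ⋙ hom = 𝟭 B

namespace CatIso

/-- The identity isomorphism of categories. -/
def refl (A : Type u) [Category.{u} A] : CatIso A A where
  hom := 𝟭 A
  inv := 𝟭 A
  hom_inv_id := rfl
  inv_hom_id := rfl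

/-- Product of isomorphisms of categories. -/
def prod {A : Type u} [Category.{u} A] {B : Type u} [Category.{u} B]
    {C : Type u} [Category.{u} C] {D : Type u} [Category.{u} D]
    (ι : CatIso A B) (κ : CatIso C D) : CatIso (A × C) (B × D) where
  hom := ι.hom.prod κ.hom
  inv := ι.inv.prod κ.inv
  hom_inv_id := by
    rw [show ι.hom.prod κ.hom ⋙ ι.inv.prod κ.inv
        = (ι.hom ⋙ ι.inv).prod (κ.hom ⋙ κ.inv) from rfl, ι.hom_inv_id, κ.hom_inv_id]
    rfl
  inv_hom_id := by
    rw [show ι.inv.prod κ.inv ⋙ ι.hom.prod κ.hom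
        = (ι.inv ⋙ ι.hom).prod (κ.inv ⋙ κ.hom) from rfl, ι.inv_hom_id, κ.inv_hom_id]
    rfl

end CatIso

namespace ParFunctor

section Seq

variable {A : Type u} [Category.{u} A] {B : Type u} [Category.{u} B]
  {C : Type u} [Category.{u} C]

/-- Sequential composition of p-functors: parameter category `𝒫 × 𝒬`,
`(f;g)_{(p,q)} = f_p ⋙ g_q` on objects and the Godement product on parameter arrows. -/
def seq (f : ParFunctor A B) (g : ParFunctor B C) : ParFunctor A C where
  P := f.P × g.P
  F :=
    { obj := fun pq => f.F.obj pq.1 ⋙ g.F.obj pq.2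
      map := fun eh => f.F.map eh.1 ◫ g.F.map eh.2
      map_id := by
        intro pq
        ext X
        simp [NatTrans.hcomp]
      map_comp := by
        intro pq pq' pq'' eh eh'
        dsimp
        rw [Functor.map_comp, Functor.map_comp, NatTrans.exchange] }

end Seq

/-- The identity p-functor: terminal parameter category, constantly the identity functor. -/
def idP (A : Type u) [Category.{u} A] : ParFunctor A A where
  P := Discrete PUnit.{u + 1}
  F := (Functor.const _).obj (𝟭 A)

variable {S : Type u} [Category.{u} S] {T : Type u} [Category.{u} T]

/-- Equivalence of p-functors via a given isomorphism `α` of the parameter categories: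
`f` and `α ⋙ f'` are naturally isomorphic. -/
def EquivVia (f f' : ParFunctor S T) (α : CatIso f.P f'.P) : Prop :=
  Nonempty (f.F ≅ α.hom ⋙ f'.F)

/-- Equivalence of p-functors: some isomorphism of the parameter categories identifies
them up to natural isomorphism. -/
def Equiv (f f' : ParFunctor S T) : Prop :=
  ∃ α : CatIso f.P f'.P, EquivVia f f' α

end ParFunctor

/-- An object of the category `pCat`: a small category. -/
structure PCat : Type (u + 1) where
  /-- the underlying category -/
  carrier : Type u
  [cat : Category.{u} carrier]

attribute [instance] PCat.cat

/-- Morphisms of `pCat`: equivalence classes of parameterized functors. -/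
def PHom (X Y : PCat.{u}) : Type (u + 1) :=
  Quot (ParFunctor.Equiv (S := X.carrier) (T := Y.carrier))

/-!
Equivalence of p-functors is a congruence for sequential composition: isomorphisms
`f ≅ α ⋙ f'` and `g ≅ β ⋙ g'` combine, by the interchange law for the Godement product, into
`f;g ≅ (α × β) ⋙ f';g'`. The unit and associativity laws hold up to the canonical isomorphisms
`𝟙 × 𝒫 ≅ 𝒫 ≅ 𝒫 × 𝟙` and `(𝒫 × 𝒬) × ℛ ≅ 𝒫 × (𝒬 × ℛ)` of parameter categories, with the unitors
and associators of functor composition as natural isomorphisms; on equivalence classes they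
therefore hold strictly.
-/

namespace CatIso

variable (A : Type u) [Category.{u} A] (B : Type u) [Category.{u} B]
  (C : Type u) [Category.{u} C]

def punitProd : CatIso (Discrete PUnit.{u + 1} × A) A where
  hom := CategoryTheory.Prod.snd _ _
  inv := ((Functor.const A).obj ⟨PUnit.unit⟩).prod' (𝟭 A)
  hom_inv_id := rfl
  inv_hom_id := rfl

def prodPUnit : CatIso (A × Discrete PUnit.{u + 1}) A where
  hom := CategoryTheory.Prod.fst _ _
  inv := (𝟭 A).prod' ((Functor.const A).obj ⟨PUnit.unit⟩)
  hom_inv_id := rfl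
  inv_hom_id := rfl

def prodAssoc : CatIso ((A × B) × C) (A × (B × C)) where
  hom := prod.associator A B C
  inv := prod.inverseAssociator A B C
  hom_inv_id := rfl
  inv_hom_id := rfl

end CatIso

namespace ParFunctor

variable {A : Type u} [Category.{u} A] {B : Type u} [Category.{u} B]
  {C : Type u} [Category.{u} C]

theorem Equiv.refl (f : ParFunctor A B) : f.Equiv f :=
  ⟨CatIso.refl _, ⟨(Functor.leftUnitor f.F).symm⟩⟩

theorem Equiv.seq {f f' : ParFunctor A B} {g g' : ParFunctor B C}
    (hf : f.Equiv f') (hg : g.Equiv g') : (f.seq g).Equiv (f'.seq g') := by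
  obtain ⟨α, ⟨φ⟩⟩ := hf
  obtain ⟨β, ⟨ψ⟩⟩ := hg
  refine ⟨α.prod β, ⟨NatIso.ofComponents (fun pq => NatIso.hcomp (φ.app pq.1) (ψ.app pq.2)) ?_⟩⟩
  intro pq pq' eh
  change (f.F.map eh.1 ◫ g.F.map eh.2) ≫ (φ.hom.app pq'.1 ◫ ψ.hom.app pq'.2) =
    (φ.hom.app pq.1 ◫ ψ.hom.app pq.2) ≫ (f'.F.map (α.hom.map eh.1) ◫ g'.F.map (β.hom.map eh.2))
  rw [← NatTrans.exchange, ← NatTrans.exchange]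
  congr 1
  · exact φ.hom.naturality eh.1
  · exact ψ.hom.naturality eh.2

theorem idP_seq_equiv (f : ParFunctor A B) : ((idP A).seq f).Equiv f :=
  ⟨CatIso.punitProd f.P, ⟨NatIso.ofComponents (fun up => Functor.leftUnitor (f.F.obj up.2))
    (fun eh => by
      change (𝟙 (𝟭 A) ◫ f.F.map eh.2) ≫ _ = _ ≫ f.F.map eh.2
      ext; simp)⟩⟩

theorem seq_idP_equiv (f : ParFunctor A B) : (f.seq (idP B)).Equiv f :=
  ⟨CatIso.prodPUnit f.P, ⟨NatIso.ofComponents (fun pu => Functor.rightUnitor (f.F.obj pu.1))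
    (fun eh => by
      change (f.F.map eh.1 ◫ 𝟙 (𝟭 B)) ≫ _ = _ ≫ f.F.map eh.1
      ext; simp)⟩⟩

variable {D : Type u} [Category.{u} D]

theorem seq_assoc_equiv (f : ParFunctor A B) (g : ParFunctor B C) (h : ParFunctor C D) :
    ((f.seq g).seq h).Equiv (f.seq (g.seq h)) :=
  ⟨CatIso.prodAssoc f.P g.P h.P, ⟨NatIso.ofComponents
    (fun pqr => Functor.associator (f.F.obj pqr.1.1) (g.F.obj pqr.1.2) (h.F.obj pqr.2))
    (fun eh => by
      change ((f.F.map eh.1.1 ◫ g.F.map eh.1.2) ◫ h.F.map eh.2) ≫ _ =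
        _ ≫ (f.F.map eh.1.1 ◫ (g.F.map eh.1.2 ◫ h.F.map eh.2))
      ext; simp)⟩⟩

end ParFunctor

namespace PHom

def comp {X Y Z : PCat.{u}} : PHom X Y → PHom Y Z → PHom X Z :=
  Quot.map₂ ParFunctor.seq (fun f _ _ hg => (ParFunctor.Equiv.refl f).seq hg)
    (fun _ _ g hf => hf.seq (ParFunctor.Equiv.refl g))

end PHom

/-- **Statement 12.** Small categories as objects together with equivalence classes of
parameterized functors as morphisms form a category `pCat`: sequential composition of
p-functors descends to a well-defined composition of equivalence classes, which is
strictly associative, and the classes of the identity p-functors are two-sided units. -/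
theorem PCat.pCat_category :
    ∃ comp : ∀ X Y Z : PCat.{u}, PHom X Y → PHom Y Z → PHom X Z,
      -- composition descends sequential composition of p-functors to equivalence classes
      (∀ (X Y Z : PCat.{u}) (f : ParFunctor X.carrier Y.carrier)
          (g : ParFunctor Y.carrier Z.carrier),
          comp X Y Z (Quot.mk _ f) (Quot.mk _ g) = Quot.mk _ (f.seq g)) ∧
      -- the identity p-functors are two-sided units
      (∀ (X Y : PCat.{u}) (f : PHom X Y),
          comp X X Y (Quot.mk _ (ParFunctor.idP X.carrier)) f = f) ∧
      (∀ (X Y : PCat.{u}) (f : PHom X Y),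
          comp X Y Y f (Quot.mk _ (ParFunctor.idP Y.carrier)) = f) ∧
      -- composition is (strictly) associative
      (∀ (X Y Z W : PCat.{u}) (f : PHom X Y) (g : PHom Y Z) (h : PHom Z W),
          comp X Z W (comp X Y Z f g) h = comp X Y W f (comp Y Z W g h)) := by
  exact ⟨fun _ _ _ => PHom.comp, fun _ _ _ _ _ => rfl,
    fun _ _ => Quot.ind fun f => Quot.sound f.idP_seq_equiv,
    fun _ _ => Quot.ind fun f => Quot.sound f.seq_idP_equiv,
    fun _ _ _ _ f g h =>
      Quot.induction_on₃ f g h fun f g h => Quot.sound (f.seq_assoc_equiv g h)⟩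
end
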